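/- arXiv:1702.07109 — 2 statements merged into one kernel-verified Lean document; each statement's English description precedes it below -/
import Mathlib

section
/- With E_max/E_min = 4 and m(θ) = −1/log₂(cos θ), the inequality 16^{1/(m(θ)+3)} − 1 > tan² θ holds for θ = 37° (expressed in radians, θ = 37π/180), i.e., the illumination constraint does not bind at θ ≤ 37°. -/
/-!
Writing `c = cos θ`, one has `tan² θ = c⁻² - 1` and `m(θ) = -log 2 / log c`, so after taking
logarithms the condition `tan² θ < r^{2/(m+3)} - 1` becomes linear in `log c` and reduces to
`2 < r c³`. For `r = 4` this is `cos θ > 2^{-1/3} ≈ 0.7937`, and `cos 37° ≈ 0.7986` is certified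
by the quartic lower bound `cos x ≥ 1 - x²/2 + x⁴/32` obtained from the double-angle formula.
-/

open Real

noncomputable def lambertianIndex (θ : ℝ) : ℝ := -1 / logb 2 (cos θ)

lemma lambertianIndex_mul_log_cos {θ : ℝ} (h : log (cos θ) ≠ 0) :
    lambertianIndex θ * log (cos θ) = -log 2 := by
  have hl2 : log 2 ≠ 0 := (log_pos one_lt_two).ne'
  rw [lambertianIndex, logb]
  field_simp

lemma log_cos_neg {θ : ℝ} (h₀ : 0 < θ) (h₁ : θ < π / 2) : log (cos θ) < 0 :=
  log_neg (cos_pos_of_mem_Ioo ⟨by linarith, h₁⟩)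
    (cos_zero ▸ cos_lt_cos_of_nonneg_of_le_pi le_rfl (by linarith) h₀)

lemma lambertianIndex_pos {θ : ℝ} (h₀ : 0 < θ) (h₁ : θ < π / 2) : 0 < lambertianIndex θ :=
  div_pos_of_neg_of_neg neg_one_lt_zero
    (div_neg_of_neg_of_pos (log_cos_neg h₀ h₁) (log_pos one_lt_two))

/-- The illumination constraint for the luminance ratio `r = E_max / E_min`. -/
theorem tan_sq_lt_rpow_lambertianIndex_sub_one_iff {θ r : ℝ} (h₀ : 0 < θ) (h₁ : θ < π / 2)
    (hr : 0 < r) :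
    tan θ ^ 2 < r ^ (2 / (lambertianIndex θ + 3)) - 1 ↔ 2 < r * cos θ ^ 3 := by
  have hc₀ : 0 < cos θ := cos_pos_of_mem_Ioo ⟨by linarith, h₁⟩
  have hlog := log_cos_neg h₀ h₁
  have hm : 0 < lambertianIndex θ + 3 := by linarith [lambertianIndex_pos h₀ h₁]
  have hmlog := lambertianIndex_mul_log_cos hlog.ne
  have htan : tan θ ^ 2 = (cos θ ^ 2)⁻¹ - 1 := by
    rw [tan_eq_sin_div_cos, div_pow, sin_sq, sub_div, div_self (by positivity), inv_eq_one_div]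
  rw [htan, sub_lt_sub_iff_right, ← log_lt_log_iff (by positivity) (rpow_pos_of_pos hr _),
    ← log_lt_log_iff two_pos (by positivity), log_inv, log_pow, log_rpow hr,
    log_mul hr.ne' (by positivity), log_pow, div_mul_eq_mul_div, lt_div_iff₀ hm]
  push_cast
  have hlhs : -(2 * log (cos θ)) * (lambertianIndex θ + 3) = 2 * (log 2 - 3 * log (cos θ)) := by
    linear_combination -2 * hmlog
  rw [hlhs]
  constructor <;> intro h <;> linarith

lemma one_sub_sq_div_two_add_pow_four_div_32_le_cos {x : ℝ} (hx : x ^ 2 ≤ 8) :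
    1 - x ^ 2 / 2 + x ^ 4 / 32 ≤ cos x := by
  have hhalf : 1 - (x / 2) ^ 2 / 2 ≤ cos (x / 2) := one_sub_sq_div_two_le_cos
  have hsq : (1 - (x / 2) ^ 2 / 2) ^ 2 ≤ cos (x / 2) ^ 2 :=
    pow_le_pow_left₀ (by nlinarith) hhalf 2
  calc 1 - x ^ 2 / 2 + x ^ 4 / 32 = 2 * (1 - (x / 2) ^ 2 / 2) ^ 2 - 1 := by ring
    _ ≤ 2 * cos (x / 2) ^ 2 - 1 := by linarith
    _ = cos x := by rw [← cos_two_mul, mul_div_cancel₀ x two_ne_zero]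

lemma one_lt_two_mul_cos_37deg_pow_three : 1 < 2 * cos (37 * π / 180) ^ 3 := by
  have hx₀ : 0 < 37 * π / 180 := by positivity
  have hx₁ : 37 * π / 180 < 0.6475 := by linarith [pi_lt_d2]
  have hcos : 0.7958 ≤ cos (37 * π / 180) := by
    have := one_sub_sq_div_two_add_pow_four_div_32_le_cos (x := 37 * π / 180) (by nlinarith)
    nlinarith [pow_le_pow_left₀ hx₀.le hx₁.le 2, pow_pos hx₀ 2]
  nlinarith [pow_le_pow_left₀ (by norm_num) hcos 3]

/-- With `E_max/E_min = 4` and Lambertian index `m(θ) = −1/log₂(cos θ)`, the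
inequality `16^{1/(m(θ)+3)} − 1 > tan² θ` holds at `θ = 37π/180`. -/
theorem illumination_inactive_at_37deg :
    Real.tan (37 * π / 180) ^ 2 <
      (16 : ℝ) ^ (1 / (-1 / Real.logb 2 (Real.cos (37 * π / 180)) + 3)) - 1 := by
  have h16 : (16 : ℝ) ^ (1 / (lambertianIndex (37 * π / 180) + 3)) =
      4 ^ (2 / (lambertianIndex (37 * π / 180) + 3)) := by
    rw [div_eq_mul_one_div 2, ← Nat.cast_ofNat (R := ℝ) (n := 2),
      rpow_natCast_mul zero_le_four]
    norm_num
  have hcos := one_lt_two_mul_cos_37deg_pow_three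
  rw [← lambertianIndex, h16, tan_sq_lt_rpow_lambertianIndex_sub_one_iff (by positivity)
    (by linarith [pi_pos]) four_pos]
  linarith
end

section
/- For constants ρ > 0, d_v > 0, m ≥ 0, in the high-SNR approximation log(1+x) ≈ log(x), the integral (2/(r_max²−r_min²)) ∫_{r_min}^{r_max} r · ln(ρ κ(r)) dr, where κ(r) = K₀/(r²+d_v²)^{m+3} for a constant K₀ > 0, evaluates to [d_max(ln(ρκ_min) + m + 3) − d_min(ln(ρκ_max) + m + 3)] / (r_max² − r_min²), with d_max = r_max² + d_v², d_min = r_min² + d_v², κ_min = K₀/d_max^{m+3}, κ_max = K₀/d_min^{m+3}. -/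
/-!
Substituting `u = r² + d_v²` turns the integral into `½ ∫ log (ρ K₀ u^{-(m+3)}) du`, and
`u ↦ u (log (ρ K₀ u^{-(m+3)}) + m + 3)` is an antiderivative of that integrand on `u > 0`.
-/

open Real Set intervalIntegral

lemma log_mul_div_rpow {a b u : ℝ} (p : ℝ) (ha : a ≠ 0) (hb : b ≠ 0) (hu : 0 < u) :
    log (a * (b / u ^ p)) = log a + log b - p * log u := by
  rw [log_mul ha (by positivity), log_div hb (by positivity), log_rpow hu]
  ring

lemma continuousOn_log_mul_div_rpow {a b : ℝ} (p : ℝ) (ha : a ≠ 0) (hb : b ≠ 0) :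
    ContinuousOn (fun u : ℝ => log (a * (b / u ^ p))) (Ioi 0) := by
  have hrpow_ne : ∀ u ∈ Ioi (0 : ℝ), u ^ p ≠ 0 := fun u hu => (rpow_pos_of_pos hu p).ne'
  have hrpow : ContinuousOn (fun u : ℝ => u ^ p) (Ioi 0) :=
    continuousOn_id.rpow_const fun u hu => Or.inl (ne_of_gt hu)
  exact (continuousOn_const.mul (continuousOn_const.div hrpow hrpow_ne)).log fun u hu =>
    mul_ne_zero ha (div_ne_zero hb (hrpow_ne u hu))

lemma integral_mul_comp_sq_add {g : ℝ → ℝ} (a b c : ℝ) (hg : ContinuousOn g (Ici c)) :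
    ∫ r in a..b, r * g (r ^ 2 + c) = (1 / 2) * ∫ u in a ^ 2 + c..b ^ 2 + c, g u := by
  have hderiv : ∀ r ∈ uIcc a b, HasDerivAt (fun r : ℝ => r ^ 2 + c) (2 * r) r := fun r _ => by
    simpa using (hasDerivAt_pow 2 r).add_const c
  have himage : (fun r : ℝ => r ^ 2 + c) '' uIcc a b ⊆ Ici c := by
    rintro _ ⟨r, -, rfl⟩
    simpa using sq_nonneg r
  rw [← integral_comp_mul_deriv' hderiv (by fun_prop) (hg.mono himage), ← integral_const_mul]
  congr 1 with r
  simp only [Function.comp_apply]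
  ring

lemma integral_log_mul_div_rpow {a b u₀ u₁ : ℝ} (p : ℝ) (ha : a ≠ 0) (hb : b ≠ 0)
    (hu₀ : 0 < u₀) (hu₁ : 0 < u₁) :
    ∫ u in u₀..u₁, log (a * (b / u ^ p)) =
      u₁ * (log (a * (b / u₁ ^ p)) + p) - u₀ * (log (a * (b / u₀ ^ p)) + p) := by
  have hpos : ∀ u ∈ uIcc u₀ u₁, 0 < u := fun u hu =>
    lt_of_lt_of_le (lt_min hu₀ hu₁) hu.1
  rw [integral_congr fun u hu => log_mul_div_rpow p ha hb (hpos u hu),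
    integral_sub intervalIntegrable_const (intervalIntegrable_log'.const_mul p),
    integral_const, integral_const_mul, integral_log,
    log_mul_div_rpow p ha hb hu₀, log_mul_div_rpow p ha hb hu₁]
  simp only [smul_eq_mul]
  ring

theorem average_rate_closed_form_general (ρ dv m K0 rmin rmax : ℝ) (hρ : 0 < ρ)
    (hdv : 0 < dv) (hK0 : 0 < K0) :
    (2 / (rmax ^ 2 - rmin ^ 2)) *
        ∫ r in rmin..rmax, r * Real.log (ρ * (K0 / (r ^ 2 + dv ^ 2) ^ (m + 3))) =
      ((rmax ^ 2 + dv ^ 2) *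
          (Real.log (ρ * (K0 / (rmax ^ 2 + dv ^ 2) ^ (m + 3))) + m + 3) -
        (rmin ^ 2 + dv ^ 2) *
          (Real.log (ρ * (K0 / (rmin ^ 2 + dv ^ 2) ^ (m + 3))) + m + 3)) /
        (rmax ^ 2 - rmin ^ 2) := by
  have hcont := (continuousOn_log_mul_div_rpow (m + 3) hρ.ne' hK0.ne').mono
    (Ici_subset_Ioi.2 (by positivity : (0 : ℝ) < dv ^ 2))
  rw [integral_mul_comp_sq_add rmin rmax (dv ^ 2) hcont,
    integral_log_mul_div_rpow (m + 3) hρ.ne' hK0.ne' (by positivity) (by positivity)]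
  ring

/-- Closed form of the high-SNR average rate integral: with
`κ(r) = K₀/(r²+d_v²)^{m+3}`, `d_max = r_max²+d_v²`, `d_min = r_min²+d_v²`,
`κ_min = K₀/d_max^{m+3}`, `κ_max = K₀/d_min^{m+3}`, one has
`(2/(r_max²−r_min²)) ∫ r·ln(ρκ(r)) dr
  = [d_max(ln(ρκ_min)+m+3) − d_min(ln(ρκ_max)+m+3)]/(r_max²−r_min²)`. -/
theorem average_rate_closed_form (ρ dv m K0 rmin rmax : ℝ) (hρ : 0 < ρ)
    (hdv : 0 < dv) (hm : 0 ≤ m) (hK0 : 0 < K0) (hrmin : 0 ≤ rmin)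
    (hlt : rmin < rmax) :
    (2 / (rmax ^ 2 - rmin ^ 2)) *
        ∫ r in rmin..rmax, r * Real.log (ρ * (K0 / (r ^ 2 + dv ^ 2) ^ (m + 3))) =
      ((rmax ^ 2 + dv ^ 2) *
          (Real.log (ρ * (K0 / (rmax ^ 2 + dv ^ 2) ^ (m + 3))) + m + 3) -
        (rmin ^ 2 + dv ^ 2) *
          (Real.log (ρ * (K0 / (rmin ^ 2 + dv ^ 2) ^ (m + 3))) + m + 3)) /
        (rmax ^ 2 - rmin ^ 2) :=
  average_rate_closed_form_general ρ dv m K0 rmin rmax hρ hdv hK0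
end
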